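/- Assume that for every c > 0 in the interior of the domain D(E), the matrix 𝔹(c) is positive semidefinite and (d−1)(ε₁(c) − ε₀(c)) ≥ 0. Then: (i) the map c ↦ c^{−2/(d+2)} E(c) is nondecreasing on (0,∞), i.e. for all 0 < c₁ < c₂ one has E(c₁) ≤ (c₁/c₂)^{2/(d+2)} E(c₂); (ii) for all ρ, γ > 0 with γ^{d+2}/ρ^d in the interior of D(E), one has (1 − 4/d²) ρ ∂_ρ N_E(ρ, γ) + γ ∂_γ N_E(ρ, γ) ≥ 0; (iii) for all ρ, γ > 0, the map s ↦ N_E(s^{1−4/d²} ρ, s γ) is nondecreasing on (0,∞). -/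

import Mathlib

/-! Testing the positive semidefinite matrix `𝔹(c)` against `(1, -1)` gives
`2 E(c) ≤ (d + 2) c E'(c)` on the interior of the domain, i.e. `c ↦ c^(-2/(d+2)) E(c)` has
nonnegative derivative there; convexity of `E` carries this monotonicity up to the right end
point of its domain, which is (i). At `c = γ^(d+2)/ρ^d` the combination in (ii) equals
`(2/d) (ρ/γ)^d ((d + 2) ε₁(c) - 2 ε₀(c))`. Finally
`N_E(s^(1-4/d²) ρ, s γ) = s^(-4/d) (ρ/γ)^d E(s^(2+4/d) c)`, and since
`(2 + 4/d) · 2/(d + 2) = 4/d`, (i) applied to the arguments `s^(2+4/d) c` gives (iii). -/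

noncomputable section

open scoped Classical

/-- `ε₁(c) = c E'(c)`. -/
def eps1 (Ef : ℝ → ℝ) (c : ℝ) : ℝ := c * deriv Ef c

/-- `ε₂(c) = c² E''(c)`. -/
def eps2 (Ef : ℝ → ℝ) (c : ℝ) : ℝ := c ^ 2 * deriv (deriv Ef) c

/-- The symmetric 2×2 matrix `𝔹(c)`. -/
def BmatE (d : ℕ) (Ef : ℝ → ℝ) (c : ℝ) : Matrix (Fin 2) (Fin 2) ℝ :=
  !![eps2 Ef c - ((d : ℝ) - 1) / d * (eps1 Ef c - Ef c),
     eps2 Ef c - 1 / 2 * (eps1 Ef c - Ef c);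
     eps2 Ef c - 1 / 2 * (eps1 Ef c - Ef c),
     eps2 Ef c + 1 / 2 * eps1 Ef c]

/-- `N_E(ρ,γ) = (ρ/γ)^d E(γ^{d+2}/ρ^d)`, with extended-real values. -/
def NEfun (d : ℕ) (Efun : ℝ → EReal) (ρ γ : ℝ) : EReal :=
  (((ρ / γ) ^ d : ℝ) : EReal) * Efun (γ ^ (d + 2) / ρ ^ d)

/-- The real-valued version of `N_E` built from a real representative `Ef` of `E`. -/
def NEreal (d : ℕ) (Ef : ℝ → ℝ) (ρ γ : ℝ) : ℝ :=
  (ρ / γ) ^ d * Ef (γ ^ (d + 2) / ρ ^ d)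

open Set Filter Topology

def effectiveDomain (E : ℝ → EReal) : Set ℝ := {c | 0 ≤ c ∧ E c ≠ ⊤}

lemma pos_of_mem_interior_effectiveDomain {E : ℝ → EReal} {c : ℝ}
    (hc : c ∈ interior (effectiveDomain E)) : 0 < c := by
  have := interior_mono (fun x (hx : x ∈ effectiveDomain E) => mem_Ici.2 hx.1) hc
  rwa [interior_Ici] at this

lemma Ioo_subset_interior_effectiveDomain {E : ℝ → EReal} (hE0 : E 0 = 0)
    (hconv : ∀ c₁ ∈ Ici (0 : ℝ), ∀ c₂ ∈ Ici (0 : ℝ), ∀ t ∈ Icc (0 : ℝ) 1,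
      E (t * c₁ + (1 - t) * c₂) ≤ (t : EReal) * E c₁ + ((1 - t : ℝ) : EReal) * E c₂)
    {b : ℝ} (hb : b ∈ effectiveDomain E) : Ioo 0 b ⊆ interior (effectiveDomain E) := by
  refine interior_maximal (fun x hx => ⟨hx.1.le, ?_⟩) isOpen_Ioo
  have hb0 : 0 < b := hx.1.trans hx.2
  have hx_eq : x / b * b + (1 - x / b) * 0 = x := by field_simp; ring
  have hle := hconv b hb.1 0 self_mem_Ici (x / b)
    ⟨div_nonneg hx.1.le hb0.le, (div_le_one hb0).2 hx.2.le⟩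
  rw [hx_eq, hE0, mul_zero, add_zero] at hle
  refine ne_top_of_le_ne_top ?_ hle
  rw [EReal.mul_ne_top]
  exact ⟨Or.inl (EReal.coe_ne_bot _), Or.inl (EReal.coe_nonneg.2 (div_nonneg hx.1.le hb0.le)),
    Or.inl (EReal.coe_ne_top _), Or.inr hb.2⟩

lemma two_mul_le_of_posSemidef_BmatE {d : ℕ} (hd : 0 < (d : ℝ)) {Ef : ℝ → ℝ} {c : ℝ}
    (hB : (BmatE d Ef c).PosSemidef) : 2 * Ef c ≤ ((d : ℝ) + 2) * eps1 Ef c := by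
  have h := hB.dotProduct_mulVec_nonneg ![1, -1]
  simp only [BmatE, Matrix.mulVec, dotProduct, Fin.sum_univ_two, Matrix.cons_val_zero,
    Matrix.cons_val_one, Matrix.of_apply, Matrix.cons_val', Matrix.empty_val',
    Matrix.cons_val_fin_one, star_trivial] at h
  have hv : 0 ≤ (eps1 Ef c - Ef c) / d + eps1 Ef c / 2 := by
    refine h.trans_eq ?_
    field_simp
    ring
  have := mul_nonneg (mul_nonneg zero_le_two hd.le) hv
  rw [show 2 * d * ((eps1 Ef c - Ef c) / d + eps1 Ef c / 2)
    = ((d : ℝ) + 2) * eps1 Ef c - 2 * Ef c by field_simp; ring] at this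
  linarith

lemma monotoneOn_rpow_neg_mul {f : ℝ → ℝ} {α : ℝ} {s : Set ℝ} (hs : IsOpen s)
    (hs' : Convex ℝ s) (hpos : s ⊆ Ioi 0) (hf : DifferentiableOn ℝ f s)
    (h : ∀ x ∈ s, α * f x ≤ eps1 f x) : MonotoneOn (fun x => x ^ (-α) * f x) s := by
  have hderiv : ∀ x ∈ s, HasDerivAt (fun y => y ^ (-α) * f y)
      (x ^ (-α - 1) * (x * deriv f x - α * f x)) x := by
    intro x hx
    have hx0 : 0 < x := hpos hx
    refine ((Real.hasDerivAt_rpow_const (Or.inl hx0.ne')).mul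
      (hf.differentiableAt (hs.mem_nhds hx)).hasDerivAt).congr_deriv ?_
    rw [show x ^ (-α) = x ^ (-α - 1) * x by rw [← Real.rpow_add_one hx0.ne']; ring_nf]
    ring
  refine monotoneOn_of_hasDerivWithinAt_nonneg hs'
    (fun x hx => (hderiv x hx).continuousAt.continuousWithinAt) (fun x hx => (hderiv x (interior_subset hx)).hasDerivWithinAt) fun x hx => ?_
  rw [hs.interior_eq] at hx
  exact mul_nonneg (Real.rpow_nonneg (hpos hx).le _) (sub_nonneg.2 (h x hx))

lemma le_div_rpow_mul_of_monotoneOn {f : ℝ → ℝ} {α a b L : ℝ} (ha : 0 < a) (hab : a < b)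
    (hmono : MonotoneOn (fun x => x ^ (-α) * f x) (Ioo 0 b))
    (hchord : ∀ t ∈ Ioo (0 : ℝ) 1, f (t * a + (1 - t) * b) ≤ t * f a + (1 - t) * L) :
    f a ≤ (a / b) ^ α * L := by
  have hb : 0 < b := ha.trans hab
  suffices h : a ^ (-α) * f a ≤ b ^ (-α) * L by
    calc f a = a ^ α * (a ^ (-α) * f a) := by rw [← mul_assoc, ← Real.rpow_add ha]; simp
      _ ≤ a ^ α * (b ^ (-α) * L) := mul_le_mul_of_nonneg_left h (Real.rpow_nonneg ha.le _)
      _ = (a / b) ^ α * L := by rw [Real.div_rpow ha.le hb.le, Real.rpow_neg hb.le]; ring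
  have hlim : Tendsto (fun t : ℝ => (t * a + (1 - t) * b) ^ (-α) * (t * f a + (1 - t) * L))
      (𝓝[>] 0) (𝓝 (b ^ (-α) * L)) := by
    refine tendsto_nhdsWithin_of_tendsto_nhds ?_
    have hcont : ContinuousAt
        (fun t : ℝ => (t * a + (1 - t) * b) ^ (-α) * (t * f a + (1 - t) * L)) 0 :=
      (ContinuousAt.rpow_const (by fun_prop) (Or.inl (by simpa using hb.ne'))).mul (by fun_prop)
    simpa using hcont.tendsto
  refine ge_of_tendsto hlim ?_
  filter_upwards [Ioo_mem_nhdsGT one_pos] with t ht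
  have hac : a < t * a + (1 - t) * b := by nlinarith [ht.1, ht.2]
  have hcb : t * a + (1 - t) * b < b := by nlinarith [ht.1, ht.2]
  calc a ^ (-α) * f a ≤ (t * a + (1 - t) * b) ^ (-α) * f (t * a + (1 - t) * b) :=
        hmono ⟨ha, hab⟩ ⟨ha.trans hac, hcb⟩ hac.le
    _ ≤ (t * a + (1 - t) * b) ^ (-α) * (t * f a + (1 - t) * L) :=
        mul_le_mul_of_nonneg_left (hchord t ht) (Real.rpow_nonneg (ha.trans hac).le _)

/- `E c₂` may sit on the boundary of the domain, where `Ef` carries no information, so `c₂` is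
reached from inside along the chord of the convex function `E`. -/
lemma le_div_rpow_mul_of_mul_le_eps1 {E : ℝ → EReal} {Ef : ℝ → ℝ} {α : ℝ}
    (hbot : ∀ c, E c ≠ ⊥) (hE0 : E 0 = 0)
    (hconv : ∀ c₁ ∈ Ici (0 : ℝ), ∀ c₂ ∈ Ici (0 : ℝ), ∀ t ∈ Icc (0 : ℝ) 1,
      E (t * c₁ + (1 - t) * c₂) ≤ (t : EReal) * E c₁ + ((1 - t : ℝ) : EReal) * E c₂)
    (hrep : ∀ c ∈ interior (effectiveDomain E), E c = Ef c)
    (hdiff : DifferentiableOn ℝ Ef (interior (effectiveDomain E)))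
    (hα : ∀ c ∈ interior (effectiveDomain E), α * Ef c ≤ eps1 Ef c)
    {c₁ c₂ : ℝ} (hc₁ : 0 < c₁) (hc : c₁ < c₂) :
    E c₁ ≤ (((c₁ / c₂) ^ α : ℝ) : EReal) * E c₂ := by
  by_cases htop : E c₂ = ⊤
  · rw [htop, EReal.coe_mul_top_of_pos (Real.rpow_pos_of_pos (div_pos hc₁ (hc₁.trans hc)) _)]
    exact le_top
  have hsub := Ioo_subset_interior_effectiveDomain hE0 hconv ⟨(hc₁.trans hc).le, htop⟩
  obtain ⟨L, hL⟩ : ∃ L : ℝ, E c₂ = L := ⟨_, (EReal.coe_toReal htop (hbot c₂)).symm⟩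
  have hmono := monotoneOn_rpow_neg_mul isOpen_Ioo (convex_Ioo 0 c₂) Ioo_subset_Ioi_self
    (hdiff.mono hsub) fun x hx => hα x (hsub hx)
  rw [hrep c₁ (hsub ⟨hc₁, hc⟩), hL, ← EReal.coe_mul, EReal.coe_le_coe_iff]
  refine le_div_rpow_mul_of_monotoneOn hc₁ hc hmono fun t ht => ?_
  have hct : t * c₁ + (1 - t) * c₂ ∈ Ioo 0 c₂ :=
    ⟨by nlinarith [ht.1, ht.2], by nlinarith [ht.1, ht.2]⟩
  have h := hconv c₁ hc₁.le c₂ (hc₁.trans hc).le t (Ioo_subset_Icc_self ht)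
  rwa [hrep _ (hsub hct), hrep c₁ (hsub ⟨hc₁, hc⟩), hL, ← EReal.coe_mul, ← EReal.coe_mul,
    ← EReal.coe_add, EReal.coe_le_coe_iff] at h

lemma natCast_mul_pow_sub_one {x : ℝ} (hx : x ≠ 0) (n : ℕ) :
    (n : ℝ) * x ^ (n - 1) = n * x ^ n / x := by
  rcases n with _ | n
  · simp
  · rw [Nat.add_sub_cancel, pow_succ, mul_div_assoc, mul_div_cancel_right₀ _ hx]

lemma hasDerivAt_NEreal_fst {d : ℕ} {Ef : ℝ → ℝ} {ρ γ : ℝ} (hρ : ρ ≠ 0) (hγ : γ ≠ 0)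
    (hf : DifferentiableAt ℝ Ef (γ ^ (d + 2) / ρ ^ d)) :
    HasDerivAt (fun r => NEreal d Ef r γ)
      (d / ρ * (ρ / γ) ^ d * (Ef (γ ^ (d + 2) / ρ ^ d) - eps1 Ef (γ ^ (d + 2) / ρ ^ d))) ρ := by
  have hfac : HasDerivAt (fun r => (r / γ) ^ d) (d / ρ * (ρ / γ) ^ d) ρ := by
    refine (((hasDerivAt_id ρ).div_const γ).fun_pow d).congr_deriv ?_
    rw [id, natCast_mul_pow_sub_one (div_ne_zero hρ hγ)]
    field_simp
  have harg : HasDerivAt (fun r => γ ^ (d + 2) / r ^ d) (-(d / ρ) * (γ ^ (d + 2) / ρ ^ d)) ρ := by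
    refine ((hasDerivAt_const ρ (γ ^ (d + 2))).div ((hasDerivAt_id ρ).fun_pow d)
      (pow_ne_zero d hρ)).congr_deriv ?_
    rw [id, natCast_mul_pow_sub_one hρ]
    field_simp
    ring
  exact (hfac.mul (hf.hasDerivAt.comp ρ harg)).congr_deriv
    (by simp only [eps1, Function.comp_apply]; ring)

lemma hasDerivAt_NEreal_snd {d : ℕ} {Ef : ℝ → ℝ} {ρ γ : ℝ} (hγ : γ ≠ 0)
    (hf : DifferentiableAt ℝ Ef (γ ^ (d + 2) / ρ ^ d)) :
    HasDerivAt (fun g => NEreal d Ef ρ g)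
      ((ρ / γ) ^ d / γ * ((d + 2) * eps1 Ef (γ ^ (d + 2) / ρ ^ d) - d * Ef (γ ^ (d + 2) / ρ ^ d)))
      γ := by
  have hfac : HasDerivAt (fun g => (ρ / g) ^ d) (-(d / γ) * (ρ / γ) ^ d) γ := by
    simp only [div_pow]
    refine ((hasDerivAt_const γ (ρ ^ d)).div ((hasDerivAt_id γ).fun_pow d)
      (pow_ne_zero d hγ)).congr_deriv ?_
    rw [id, natCast_mul_pow_sub_one hγ]
    field_simp
    ring
  have harg :
      HasDerivAt (fun g => g ^ (d + 2) / ρ ^ d) ((d + 2) / γ * (γ ^ (d + 2) / ρ ^ d)) γ := by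
    refine (((hasDerivAt_id γ).fun_pow (d + 2)).div_const (ρ ^ d)).congr_deriv ?_
    rw [id, natCast_mul_pow_sub_one hγ]
    push_cast
    field_simp
  exact (hfac.mul (hf.hasDerivAt.comp γ harg)).congr_deriv
    (by simp only [eps1, Function.comp_apply]; ring)

lemma scaling_deriv_NEreal_nonneg {d : ℕ} (hd : 0 < (d : ℝ)) {Ef : ℝ → ℝ} {ρ γ : ℝ}
    (hρ : 0 < ρ) (hγ : 0 < γ) (hf : DifferentiableAt ℝ Ef (γ ^ (d + 2) / ρ ^ d))
    (hE : 2 * Ef (γ ^ (d + 2) / ρ ^ d) ≤ ((d : ℝ) + 2) * eps1 Ef (γ ^ (d + 2) / ρ ^ d)) :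
    0 ≤ (1 - 4 / (d : ℝ) ^ 2) * ρ * deriv (fun r => NEreal d Ef r γ) ρ +
      γ * deriv (fun g => NEreal d Ef ρ g) γ := by
  rw [(hasDerivAt_NEreal_fst hρ.ne' hγ.ne' hf).deriv, (hasDerivAt_NEreal_snd hγ.ne' hf).deriv]
  set c := γ ^ (d + 2) / ρ ^ d
  have h : (1 - 4 / (d : ℝ) ^ 2) * ρ * (d / ρ * (ρ / γ) ^ d * (Ef c - eps1 Ef c)) +
      γ * ((ρ / γ) ^ d / γ * ((d + 2) * eps1 Ef c - d * Ef c))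
      = 2 / d * (ρ / γ) ^ d * (((d : ℝ) + 2) * eps1 Ef c - 2 * Ef c) := by
    field_simp
    ring
  rw [h]
  exact mul_nonneg (by positivity) (sub_nonneg.2 hE)

lemma NEfun_scaling {d : ℕ} (hd : (d : ℝ) ≠ 0) (E : ℝ → EReal) (ρ γ : ℝ) {s : ℝ} (hs : 0 < s) :
    NEfun d E (s ^ (1 - 4 / (d : ℝ) ^ 2) * ρ) (s * γ) =
      ((s ^ (-(4 / (d : ℝ))) * (ρ / γ) ^ d : ℝ) : EReal) *
        E (s ^ (2 + 4 / (d : ℝ)) * (γ ^ (d + 2) / ρ ^ d)) := by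
  have hfac :
      (s ^ (1 - 4 / (d : ℝ) ^ 2) * ρ / (s * γ)) ^ d = s ^ (-(4 / (d : ℝ))) * (ρ / γ) ^ d := by
    rw [mul_div_mul_comm, mul_pow, ← Real.rpow_sub_one hs.ne', ← Real.rpow_natCast,
      ← Real.rpow_mul hs.le]
    congr 2
    field_simp
    ring
  have harg : (s * γ) ^ (d + 2) / (s ^ (1 - 4 / (d : ℝ) ^ 2) * ρ) ^ d
      = s ^ (2 + 4 / (d : ℝ)) * (γ ^ (d + 2) / ρ ^ d) := by
    rw [mul_pow, mul_pow, ← Real.rpow_natCast (s ^ (1 - 4 / (d : ℝ) ^ 2)) d,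
      ← Real.rpow_mul hs.le, ← Real.rpow_natCast s (d + 2), mul_div_mul_comm,
      ← Real.rpow_sub hs]
    congr 2
    push_cast
    field_simp
    ring
  rw [NEfun, hfac, harg]

lemma monotoneOn_NEfun_scaling {d : ℕ} (hd : 0 < (d : ℝ)) {E : ℝ → EReal}
    (hE : ∀ c₁ c₂ : ℝ, 0 < c₁ → c₁ < c₂ →
      E c₁ ≤ (((c₁ / c₂) ^ (2 / ((d : ℝ) + 2)) : ℝ) : EReal) * E c₂)
    {ρ γ : ℝ} (hρ : 0 < ρ) (hγ : 0 < γ) :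
    MonotoneOn (fun s => NEfun d E (s ^ (1 - 4 / (d : ℝ) ^ 2) * ρ) (s * γ)) (Ioi 0) := by
  intro s₁ (hs₁ : 0 < s₁) s₂ (hs₂ : 0 < s₂) hle
  rcases hle.eq_or_lt with rfl | hlt
  · rfl
  simp only [NEfun_scaling hd.ne' E ρ γ hs₁, NEfun_scaling hd.ne' E ρ γ hs₂]
  set c := γ ^ (d + 2) / ρ ^ d
  have hc : 0 < c := div_pos (pow_pos hγ _) (pow_pos hρ _)
  have hlt' : s₁ ^ (2 + 4 / (d : ℝ)) * c < s₂ ^ (2 + 4 / (d : ℝ)) * c :=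
    mul_lt_mul_of_pos_right (Real.rpow_lt_rpow hs₁.le hlt (by positivity)) hc
  have hratio : (s₁ ^ (2 + 4 / (d : ℝ)) * c / (s₂ ^ (2 + 4 / (d : ℝ)) * c)) ^ (2 / ((d : ℝ) + 2))
      = (s₁ / s₂) ^ (4 / (d : ℝ)) := by
    rw [mul_div_mul_right _ _ hc.ne', ← Real.div_rpow hs₁.le hs₂.le,
      ← Real.rpow_mul (div_nonneg hs₁.le hs₂.le)]
    congr 1
    field_simp
    ring
  have h := hE _ _ (mul_pos (Real.rpow_pos_of_pos hs₁ _) hc) hlt'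
  rw [hratio] at h
  calc ((s₁ ^ (-(4 / (d : ℝ))) * (ρ / γ) ^ d : ℝ) : EReal) * E (s₁ ^ (2 + 4 / (d : ℝ)) * c)
      ≤ ((s₁ ^ (-(4 / (d : ℝ))) * (ρ / γ) ^ d : ℝ) : EReal) *
          (((s₁ / s₂) ^ (4 / (d : ℝ)) : ℝ) * E (s₂ ^ (2 + 4 / (d : ℝ)) * c)) :=
        mul_le_mul_of_nonneg_left h (EReal.coe_nonneg.2 (by positivity))
    _ = ((s₂ ^ (-(4 / (d : ℝ))) * (ρ / γ) ^ d : ℝ) : EReal) * E (s₂ ^ (2 + 4 / (d : ℝ)) * c) := by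
        rw [← mul_assoc, ← EReal.coe_mul, Real.div_rpow hs₁.le hs₂.le,
          Real.rpow_neg hs₁.le, Real.rpow_neg hs₂.le]
        congr 2
        have : s₁ ^ (4 / (d : ℝ)) ≠ 0 := (Real.rpow_pos_of_pos hs₁ _).ne'
        field_simp

theorem statement_16_general (d : ℕ) (hd : 1 ≤ d)
    (Efun : ℝ → EReal)
    (hbot : ∀ c, Efun c ≠ ⊥)
    (hE0 : Efun 0 = 0)
    (hconvE : ∀ c₁ ∈ Set.Ici (0 : ℝ), ∀ c₂ ∈ Set.Ici (0 : ℝ), ∀ t ∈ Set.Icc (0 : ℝ) 1,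
      Efun (t * c₁ + (1 - t) * c₂) ≤
        (t : EReal) * Efun c₁ + ((1 - t : ℝ) : EReal) * Efun c₂)
    (Ef : ℝ → ℝ)
    (hrep : ∀ c ∈ interior {c : ℝ | 0 ≤ c ∧ Efun c ≠ ⊤}, Efun c = ((Ef c : ℝ) : EReal))
    (hC2 : ContDiffOn ℝ 2 Ef (interior {c : ℝ | 0 ≤ c ∧ Efun c ≠ ⊤}))
    (hB : ∀ c ∈ interior {c : ℝ | 0 ≤ c ∧ Efun c ≠ ⊤}, 0 < c →
      (BmatE d Ef c).PosSemidef ∧ 0 ≤ ((d : ℝ) - 1) * (eps1 Ef c - Ef c)) :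
    (∀ c₁ c₂ : ℝ, 0 < c₁ → c₁ < c₂ →
      Efun c₁ ≤ (((c₁ / c₂) ^ (2 / ((d : ℝ) + 2)) : ℝ) : EReal) * Efun c₂) ∧
    (∀ ρ γ : ℝ, 0 < ρ → 0 < γ →
      γ ^ (d + 2) / ρ ^ d ∈ interior {c : ℝ | 0 ≤ c ∧ Efun c ≠ ⊤} →
      0 ≤ (1 - 4 / (d : ℝ) ^ 2) * ρ * deriv (fun r => NEreal d Ef r γ) ρ +
          γ * deriv (fun g => NEreal d Ef ρ g) γ) ∧
    (∀ ρ γ s₁ s₂ : ℝ, 0 < ρ → 0 < γ → 0 < s₁ → s₁ ≤ s₂ →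
      NEfun d Efun (s₁ ^ (1 - 4 / (d : ℝ) ^ 2) * ρ) (s₁ * γ) ≤
        NEfun d Efun (s₂ ^ (1 - 4 / (d : ℝ) ^ 2) * ρ) (s₂ * γ)) := by
  have hd0 : (0 : ℝ) < d := by exact_mod_cast hd
  have hdiff : DifferentiableOn ℝ Ef (interior (effectiveDomain Efun)) :=
    hC2.differentiableOn two_ne_zero
  have hkey : ∀ c ∈ interior (effectiveDomain Efun), 2 * Ef c ≤ ((d : ℝ) + 2) * eps1 Ef c :=
    fun c hc => two_mul_le_of_posSemidef_BmatE hd0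
      (hB c hc (pos_of_mem_interior_effectiveDomain hc)).1
  have hscale : ∀ c₁ c₂ : ℝ, 0 < c₁ → c₁ < c₂ →
      Efun c₁ ≤ (((c₁ / c₂) ^ (2 / ((d : ℝ) + 2)) : ℝ) : EReal) * Efun c₂ :=
    fun c₁ c₂ hc₁ hc => le_div_rpow_mul_of_mul_le_eps1 hbot hE0 hconvE hrep hdiff
      (fun c hc => by rw [div_mul_eq_mul_div, div_le_iff₀ (by positivity)]; linarith [hkey c hc])
      hc₁ hc
  refine ⟨hscale, fun ρ γ hρ hγ hc => ?_, fun ρ γ s₁ s₂ hρ hγ hs₁ hs => ?_⟩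
  · exact scaling_deriv_NEreal_nonneg hd0 hρ hγ
      (hdiff.differentiableAt (isOpen_interior.mem_nhds hc)) (hkey _ hc)
  · exact monotoneOn_NEfun_scaling hd0 hscale hρ hγ hs₁ (hs₁.trans_le hs) hs

theorem statement_16 (d : ℕ) (hd : 1 ≤ d)
    (Efun : ℝ → EReal)
    (hbot : ∀ c, Efun c ≠ ⊥)
    (hE0 : Efun 0 = 0)
    (hlsc : LowerSemicontinuousOn Efun (Set.Ici 0))
    (hconvE : ∀ c₁ ∈ Set.Ici (0 : ℝ), ∀ c₂ ∈ Set.Ici (0 : ℝ), ∀ t ∈ Set.Icc (0 : ℝ) 1,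
      Efun (t * c₁ + (1 - t) * c₂) ≤
        (t : EReal) * Efun c₁ + ((1 - t : ℝ) : EReal) * Efun c₂)
    (hfin : ∃ c₀ > (0 : ℝ), Efun c₀ ≠ ⊤)
    (Ef : ℝ → ℝ)
    (hrep : ∀ c ∈ interior {c : ℝ | 0 ≤ c ∧ Efun c ≠ ⊤}, Efun c = ((Ef c : ℝ) : EReal))
    (hC2 : ContDiffOn ℝ 2 Ef (interior {c : ℝ | 0 ≤ c ∧ Efun c ≠ ⊤}))
    (hB : ∀ c ∈ interior {c : ℝ | 0 ≤ c ∧ Efun c ≠ ⊤}, 0 < c →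
      (BmatE d Ef c).PosSemidef ∧ 0 ≤ ((d : ℝ) - 1) * (eps1 Ef c - Ef c)) :
    (∀ c₁ c₂ : ℝ, 0 < c₁ → c₁ < c₂ →
      Efun c₁ ≤ (((c₁ / c₂) ^ (2 / ((d : ℝ) + 2)) : ℝ) : EReal) * Efun c₂) ∧
    (∀ ρ γ : ℝ, 0 < ρ → 0 < γ →
      γ ^ (d + 2) / ρ ^ d ∈ interior {c : ℝ | 0 ≤ c ∧ Efun c ≠ ⊤} →
      0 ≤ (1 - 4 / (d : ℝ) ^ 2) * ρ * deriv (fun r => NEreal d Ef r γ) ρ +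
          γ * deriv (fun g => NEreal d Ef ρ g) γ) ∧
    (∀ ρ γ s₁ s₂ : ℝ, 0 < ρ → 0 < γ → 0 < s₁ → s₁ ≤ s₂ →
      NEfun d Efun (s₁ ^ (1 - 4 / (d : ℝ) ^ 2) * ρ) (s₁ * γ) ≤
        NEfun d Efun (s₂ ^ (1 - 4 / (d : ℝ) ^ 2) * ρ) (s₂ * γ)) :=
  statement_16_general d hd Efun hbot hE0 hconvE Ef hrep hC2 hB
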